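/- arXiv:1502.02279 — 3 statements merged into one kernel-verified Lean document; each statement's English description precedes it below -/
import Mathlib

section
/- Let A = Λ(a,b) with d(a) = 0, d(b) = b·a, and let A' ⊂ A be the sub-CDGA Λ(a) generated by a (with zero differential). Then the inclusion ι : A' → A is a quasi-isomorphism, but R^1(A') = {0} while R^1(A) = {0,1}; hence resonance varieties are not invariants of quasi-isomorphism type of CDGAs. -/
/-!
For `ω = t • a` the twisted differential `δ u = ω * u + d u` sends `s • a + r • b ∈ A¹` to
`((t - 1) * r) • (a * b)`, and its image on `A⁰ = ℂ·1` is `ℂ·ω`. In `A' = Λ(a)` every degree-1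
element is a multiple of `a`, hence a twisted coboundary once `t ≠ 0`. In `A` the same happens
for `t ∉ {0, 1}`, but at `t = 1` the element `b` becomes a twisted cocycle that is not a multiple
of `a`.
-/

open Submodule

/-- The grading of the exterior algebra `Λ(a, b)` on two degree-1 generators. -/
def grAB {A : Type} [Ring A] [Algebra ℂ A] (a b : A) : ℕ → Submodule ℂ A
  | 0 => span ℂ {1}
  | 1 => span ℂ {a, b}
  | 2 => span ℂ {a * b}
  | _ + 3 => ⊥

/-- The grading of the sub-CDGA `A' = Λ(a) ⊆ Λ(a, b)` generated by `a`. -/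
def grA {A : Type} [Ring A] [Algebra ℂ A] (a : A) : ℕ → Submodule ℂ A
  | 0 => span ℂ {1}
  | 1 => span ℂ {a}
  | _ + 2 => ⊥

/-- `H^i(A, δ_ω) ≠ 0` for the twisted differential `δ_ω u = ω * u + d u`. -/
def ResMem {A : Type} [Ring A] [Algebra ℂ A] (𝒜 : ℕ → Submodule ℂ A)
    (d : A →ₗ[ℂ] A) (ω : A) (i : ℕ) : Prop :=
  ∃ u ∈ 𝒜 i, ω * u + d u = 0 ∧ ∀ v ∈ 𝒜 (i - 1), ω * v + d v ≠ u

section TwistedDifferential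

variable {A : Type} [Ring A] [Algebra ℂ A]

theorem twisted_smul_one {d : A →ₗ[ℂ] A} (hd1 : d 1 = 0) (ω : A) (c : ℂ) :
    ω * (c • 1) + d (c • 1) = c • ω := by
  rw [map_smul, hd1, smul_zero, add_zero, mul_smul_comm, mul_one]

theorem resMem_one_iff {𝒜 : ℕ → Submodule ℂ A} (h𝒜 : 𝒜 0 = span ℂ {1}) {d : A →ₗ[ℂ] A}
    (hd1 : d 1 = 0) (ω : A) :
    ResMem 𝒜 d ω 1 ↔ ∃ u ∈ 𝒜 1, ω * u + d u = 0 ∧ u ∉ span ℂ {ω} := by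
  simp only [ResMem, Nat.sub_self, h𝒜, mem_span_singleton, forall_exists_index,
    forall_apply_eq_imp_iff, twisted_smul_one hd1, not_exists]

end TwistedDifferential

section ExteriorAlgebra

variable {A : Type} [Ring A] [Algebra ℂ A] {a b : A}

theorem notMem_span_singleton_of_linearIndependent
    (hind : LinearIndependent ℂ ![(1 : A), a, b, a * b]) : b ∉ span ℂ {a} := by
  have hpair : LinearIndependent ℂ ![a, b] := by
    convert hind.comp ![1, 2] (by decide) using 1
    ext i; fin_cases i <;> rfl
  simpa [mem_span_singleton] using
    (LinearIndependent.pair_iff' (by simpa using hind.ne_zero 1)).mp hpair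

theorem smul_mul_smul_add_smul (haa : a * a = 0) (t s r : ℂ) :
    (t • a) * (s • a + r • b) = (t * r) • (a * b) := by
  rw [mul_add, smul_mul_smul_comm, smul_mul_smul_comm, haa, smul_zero, zero_add]

theorem map_smul_add_smul {d : A →ₗ[ℂ] A} (hda : d a = 0) (hdb : d b = b * a)
    (hba : b * a = -(a * b)) (s r : ℂ) :
    d (s • a + r • b) = (-r) • (a * b) := by
  rw [map_add, map_smul, map_smul, hda, hdb, hba, smul_zero, zero_add, smul_neg, neg_smul]

theorem twisted_smul_add_smul {d : A →ₗ[ℂ] A} (haa : a * a = 0) (hda : d a = 0)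
    (hdb : d b = b * a) (hba : b * a = -(a * b)) (t s r : ℂ) :
    (t • a) * (s • a + r • b) + d (s • a + r • b) = ((t - 1) * r) • (a * b) := by
  rw [smul_mul_smul_add_smul haa, map_smul_add_smul hda hdb hba, ← add_smul]
  ring_nf

theorem resMem_grA_iff (ha : a ≠ 0) (t : ℂ) :
    ResMem (grA a) (0 : A →ₗ[ℂ] A) (t • a) 1 ↔ t = 0 := by
  rw [resMem_one_iff rfl (LinearMap.zero_apply 1)]
  constructor
  · rintro ⟨u, hu, -, hnot⟩
    by_contra ht
    exact hnot (by rwa [span_singleton_smul_eq (IsUnit.mk0 t ht)])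
  · rintro rfl
    exact ⟨a, mem_span_singleton_self a, by simp, by simpa using ha⟩

theorem resMem_grAB_iff (hind : LinearIndependent ℂ ![(1 : A), a, b, a * b])
    (haa : a * a = 0) (hba : b * a = -(a * b)) {d : A →ₗ[ℂ] A}
    (hd1 : d 1 = 0) (hda : d a = 0) (hdb : d b = b * a) (t : ℂ) :
    ResMem (grAB a b) d (t • a) 1 ↔ t = 0 ∨ t = 1 := by
  rw [resMem_one_iff rfl hd1]
  constructor
  · rintro ⟨u, hu, hcocycle, hnot⟩
    obtain ⟨s, r, rfl⟩ := mem_span_pair.mp hu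
    rw [twisted_smul_add_smul haa hda hdb hba, smul_eq_zero,
      or_iff_left (by simpa using hind.ne_zero 3), mul_eq_zero, sub_eq_zero] at hcocycle
    by_contra! ht
    obtain rfl : r = 0 := hcocycle.resolve_left ht.2
    rw [span_singleton_smul_eq (IsUnit.mk0 t ht.1)] at hnot
    exact hnot (by simpa using smul_mem _ s (mem_span_singleton_self a))
  · rintro (rfl | rfl)
    · exact ⟨a, subset_span (by simp), by simp [hda], by simpa using hind.ne_zero 1⟩
    · refine ⟨b, subset_span (by simp), ?_, by simpa using
        notMem_span_singleton_of_linearIndependent hind⟩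
      rw [one_smul, hdb, hba, add_neg_cancel]

end ExteriorAlgebra

theorem statement_10_general (A : Type) [Ring A] [Algebra ℂ A] (a b : A)
    (hind : LinearIndependent ℂ ![(1 : A), a, b, a * b])
    (haa : a * a = 0) (hba : b * a = -(a * b))
    (d : A →ₗ[ℂ] A)
    (hd1 : d 1 = 0) (hda : d a = 0) (hdb : d b = b * a) :
    (∀ z ∈ grA a 0, d z = 0)
    ∧ (∀ z ∈ grAB a b 1, (d z = 0 ↔ z ∈ grA a 1))
    ∧ (∀ z ∈ grAB a b 2, d z = 0 → ∃ w ∈ grAB a b 1, d w = z)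
    ∧ (∀ t : ℂ, ResMem (grA a) (0 : A →ₗ[ℂ] A) (t • a) 1 ↔ t = 0)
    ∧ (∀ t : ℂ, ResMem (grAB a b) d (t • a) 1 ↔ (t = 0 ∨ t = 1)) := by
  have hab : a * b ≠ 0 := by simpa using hind.ne_zero 3
  refine ⟨fun z hz ↦ (span_singleton_le_iff_mem 1 (LinearMap.ker d)).mpr hd1 hz, fun z hz ↦ ?_,
    fun z hz _ ↦ ?_, resMem_grA_iff (by simpa using hind.ne_zero 1),
    resMem_grAB_iff hind haa hba hd1 hda hdb⟩
  · obtain ⟨s, r, rfl⟩ := mem_span_pair.mp hz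
    refine ⟨fun hcocycle ↦ ?_, fun h ↦ (span_singleton_le_iff_mem a (LinearMap.ker d)).mpr hda h⟩
    rw [map_smul_add_smul hda hdb hba, smul_eq_zero, or_iff_left hab, neg_eq_zero] at hcocycle
    rw [hcocycle, zero_smul, add_zero]
    exact smul_mem _ s (mem_span_singleton_self a)
  · obtain ⟨c, rfl⟩ := mem_span_singleton.mp hz
    exact ⟨0 • a + (-c) • b, mem_span_pair.mpr ⟨0, -c, rfl⟩, by
      rw [map_smul_add_smul hda hdb hba, neg_neg]⟩

/-- let `A = Λ(a, b)` with `d a = 0`, `d b = b * a`, and let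
`A' = Λ(a)` be the sub-CDGA generated by `a` (with zero differential).  The
inclusion `ι : A' → A` is a quasi-isomorphism: both have `H⁰ = ℂ·1`, the
degree-1 cocycles of `A` are exactly `A'^1 = ℂ·a` (and there are no degree-1
coboundaries), `H²(A) = 0` (every degree-2 cocycle of `A` is a coboundary) and
`A'^2 = 0`.  Nevertheless `R¹(A') = {0}` while `R¹(A) = {0, 1}`; hence the
resonance varieties are not invariants of the quasi-isomorphism type. -/
theorem statement_10 (A : Type) [Ring A] [Algebra ℂ A] (a b : A)
    (hind : LinearIndependent ℂ ![(1 : A), a, b, a * b])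
    (haa : a * a = 0) (hbb : b * b = 0) (hba : b * a = -(a * b))
    (d : A →ₗ[ℂ] A)
    (hd1 : d 1 = 0) (hda : d a = 0) (hdb : d b = b * a) (hdab : d (a * b) = 0) :
    (∀ z ∈ grA a 0, d z = 0)
    ∧ (∀ z ∈ grAB a b 1, (d z = 0 ↔ z ∈ grA a 1))
    ∧ (∀ z ∈ grAB a b 2, d z = 0 → ∃ w ∈ grAB a b 1, d w = z)
    ∧ (∀ t : ℂ, ResMem (grA a) (0 : A →ₗ[ℂ] A) (t • a) 1 ↔ t = 0)
    ∧ (∀ t : ℂ, ResMem (grAB a b) d (t • a) 1 ↔ (t = 0 ∨ t = 1)) :=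
  statement_10_general A a b hind haa hba d hd1 hda hdb
end

section
/- Let W = {(t_1,t_2,t_3) ∈ (ℂ*)³ : t_2 - 1 = (t_1+1)(t_3-1)}. Then the exponential tangent cone τ_1(W) = {z ∈ ℂ³ : exp(λz) ∈ W for all λ ∈ ℂ} equals the union of the two lines {z : z_2 = z_3 = 0} ∪ {z : z_1 = z_3, z_2 = 2z_3}. -/
/-!
Multiplying out, `exp (λz) ∈ W` says `e^{λz₂} + e^{λz₁} = e^{λ(z₁+z₃)} + e^{λz₃}`. Differentiating
once and twice at `λ = 0` gives `z₂ = 2z₃` and `z₃ (z₃ - z₁) = 0`, and on both resulting lines the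
identity is immediate.
-/

open Complex

/-- The exponential tangent cone at the identity of a subset `W ⊆ (ℂ*)ⁿ`. -/
def tau1 (n : ℕ) (W : Set (Fin n → ℂ)) : Set (Fin n → ℂ) :=
  {z | ∀ lam : ℂ, (fun j => Complex.exp (lam * z j)) ∈ W}

theorem pow_add_pow_eq_of_cexp_add_cexp {a b c d : ℂ}
    (h : ∀ s, exp (a * s) + exp (b * s) = exp (c * s) + exp (d * s)) (n : ℕ) :
    a ^ n + b ^ n = c ^ n + d ^ n := by
  have hsmooth (e : ℂ) : ContDiffAt ℂ n (fun s => exp (e * s)) 0 := by fun_prop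
  have hderiv := congrArg (fun f => iteratedDeriv n f 0) (funext h)
  rw [iteratedDeriv_fun_add (hsmooth a) (hsmooth b),
    iteratedDeriv_fun_add (hsmooth c) (hsmooth d)] at hderiv
  simpa using hderiv

theorem cexp_add_cexp_eq_iff {a b c : ℂ} :
    (∀ s, exp (b * s) + exp (a * s) = exp ((a + c) * s) + exp (c * s)) ↔
      (b = 0 ∧ c = 0) ∨ (a = c ∧ b = 2 * c) := by
  constructor
  · intro h
    have h₁ := pow_add_pow_eq_of_cexp_add_cexp h 1
    have h₂ := pow_add_pow_eq_of_cexp_add_cexp h 2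
    have hb : b = 2 * c := by linear_combination h₁
    have hc : c * (c - a) = 0 := by linear_combination (h₂ - (b + 2 * c) * h₁) / 2
    rcases mul_eq_zero.mp hc with hc | hc
    · exact Or.inl ⟨by rw [hb, hc, mul_zero], hc⟩
    · exact Or.inr ⟨by linear_combination -hc, hb⟩
  · rintro (⟨rfl, rfl⟩ | ⟨rfl, rfl⟩) s
    · simp [add_comm]
    · rw [← two_mul, mul_assoc, two_mul, exp_add]

/-- for `W = {(t₁,t₂,t₃) ∈ (ℂ*)³ : t₂ - 1 = (t₁+1)(t₃-1)}`, the
exponential tangent cone `τ₁(W)` is the union of the two lines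
`{z₂ = z₃ = 0}` and `{z₁ = z₃, z₂ = 2z₃}` in `ℂ³`
(coordinates `z₁ = z 0`, `z₂ = z 1`, `z₃ = z 2`). -/
theorem statement_15 :
    tau1 3 {t | (∀ j, t j ≠ 0) ∧ t 1 - 1 = (t 0 + 1) * (t 2 - 1)}
      = {z | z 1 = 0 ∧ z 2 = 0} ∪ {z | z 0 = z 2 ∧ z 1 = 2 * z 2} := by
  ext z
  have hW : ∀ s, (exp (s * z 1) - 1 = (exp (s * z 0) + 1) * (exp (s * z 2) - 1) ↔
      exp (z 1 * s) + exp (z 0 * s) = exp ((z 0 + z 2) * s) + exp (z 2 * s)) := by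
    intro s
    simp only [mul_comm s, add_mul, exp_add]
    constructor <;> intro h <;> linear_combination h
  simp only [tau1, Set.mem_ofPred_eq, exp_ne_zero, ne_eq, not_false_eq_true, implies_true,
    true_and, hW, cexp_add_cexp_eq_iff, Set.mem_union]
end

section
/- Let S = ℂ[x₁,y₁,x₂,y₂] and let φ : S⁷ → S³ be given (on relevant columns) by the matrix with rows (y₂, x₂, y₂, x₂, -y₂, -x₂), (y₁, x₁, 0, 0, 0, 0), (0, 0, y₂, x₂, y₁, x₁). Then the vanishing locus in ℂ⁴ of the ideal of 3×3 minors of φ is the union of three planes: {x₁ = y₁ = 0} ∪ {x₂ = y₂ = 0} ∪ {x₁+x₂ = y₁+y₂ = 0}. -/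
/-!
On each of the three planes the rows of `φ(c)` satisfy a linear relation, with coefficients
`(0, 1, 0)`, `(1, 0, 0)` and `(1, 1, -1)` respectively, so every maximal minor vanishes there.
Conversely, the minor on the columns `i`, `2 + j`, `4 + k` (`i j k : Fin 2`) factors as
`-uᵢ wⱼ sₖ` with `u = (y₁, x₁)`, `w = (y₂, x₂)` and `s = (y₁ + y₂, x₁ + x₂)`. Off the first
two planes some `uᵢ` and some `wⱼ` are nonzero, which forces `s = 0`.
-/

open MvPolynomial

/-- The presentation matrix `φ` (its relevant columns) of the first homology of
the universal complex of the Bibby model of `Conf(E*, 2)`, over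
`S = ℂ[x₁, y₁, x₂, y₂]` (variables `X 0 = x₁`, `X 1 = y₁`, `X 2 = x₂`, `X 3 = y₂`). -/
noncomputable def confMatrix : Matrix (Fin 3) (Fin 6) (MvPolynomial (Fin 4) ℂ) :=
  !![X 3, X 2, X 3, X 2, -X 3, -X 2;
     X 1, X 0, 0, 0, 0, 0;
     0, 0, X 3, X 2, X 1, X 0]

open Matrix

theorem Matrix.det_submatrix_eq_zero_of_vecMul_eq_zero {m n R : Type*} [Fintype m]
    [DecidableEq m] [CommRing R] [IsDomain R] {M : Matrix m n R} {v : m → R} (hv : v ≠ 0)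
    (hM : v ᵥ* M = 0) (g : m → n) : (M.submatrix id g).det = 0 :=
  exists_vecMul_eq_zero_iff.mp ⟨v, hv, funext fun j => congr_fun hM (g j)⟩

theorem eval_det_confMatrix_submatrix (c : Fin 4 → ℂ) (g : Fin 3 → Fin 6) :
    eval c (confMatrix.submatrix id g).det = ((confMatrix.map (eval c)).submatrix id g).det := by
  rw [RingHom.map_det, RingHom.mapMatrix_apply, submatrix_map]

theorem vecMul_map_eval_confMatrix (c : Fin 4 → ℂ) (a b d : ℂ) :
    ![a, b, d] ᵥ* confMatrix.map (eval c) =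
      ![a * c 3 + b * c 1, a * c 2 + b * c 0, (a + d) * c 3, (a + d) * c 2,
        -a * c 3 + d * c 1, -a * c 2 + d * c 0] := by
  ext k
  fin_cases k <;> simp [confMatrix, vecMul, dotProduct, Fin.sum_univ_three] <;> ring

theorem exists_vecMul_map_eval_confMatrix_eq_zero {c : Fin 4 → ℂ}
    (hc : (c 0 = 0 ∧ c 1 = 0 ∨ c 2 = 0 ∧ c 3 = 0) ∨ c 0 + c 2 = 0 ∧ c 1 + c 3 = 0) :
    ∃ v ≠ 0, v ᵥ* confMatrix.map (eval c) = 0 := by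
  rcases hc with (⟨h0, h1⟩ | ⟨h2, h3⟩) | ⟨h02, h13⟩
  · refine ⟨![0, 1, 0], by simp, ?_⟩
    simp [vecMul_map_eval_confMatrix, h0, h1]
  · refine ⟨![1, 0, 0], by simp, ?_⟩
    simp [vecMul_map_eval_confMatrix, h2, h3]
  · refine ⟨![1, 1, -1], by simp, ?_⟩
    simp [vecMul_map_eval_confMatrix, eq_neg_of_add_eq_zero_left h02,
      eq_neg_of_add_eq_zero_left h13]

theorem eval_det_confMatrix_submatrix_eq_zero {c : Fin 4 → ℂ}
    (hc : (c 0 = 0 ∧ c 1 = 0 ∨ c 2 = 0 ∧ c 3 = 0) ∨ c 0 + c 2 = 0 ∧ c 1 + c 3 = 0)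
    (g : Fin 3 → Fin 6) : eval c (confMatrix.submatrix id g).det = 0 := by
  obtain ⟨v, hv, hvM⟩ := exists_vecMul_map_eval_confMatrix_eq_zero hc
  rw [eval_det_confMatrix_submatrix]
  exact det_submatrix_eq_zero_of_vecMul_eq_zero hv hvM g

theorem eval_det_confMatrix_submatrix_fin_two (c : Fin 4 → ℂ) (i j k : Fin 2) :
    eval c (confMatrix.submatrix id ![⟨i, by omega⟩, ⟨2 + j, by omega⟩, ⟨4 + k, by omega⟩]).det =
      -(![c 1, c 0] i * ![c 3, c 2] j * ![c 1 + c 3, c 0 + c 2] k) := by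
  fin_cases i <;> fin_cases j <;> fin_cases k <;>
    simp [confMatrix, det_fin_three] <;> ring

theorem add_eq_zero_of_forall_eval_det_confMatrix_submatrix_eq_zero {c : Fin 4 → ℂ}
    (h : ∀ g : Fin 3 → Fin 6, eval c (confMatrix.submatrix id g).det = 0)
    (h01 : ¬(c 0 = 0 ∧ c 1 = 0)) (h23 : ¬(c 2 = 0 ∧ c 3 = 0)) :
    c 0 + c 2 = 0 ∧ c 1 + c 3 = 0 := by
  obtain ⟨i, hi⟩ : ∃ i, ![c 1, c 0] i ≠ 0 := by
    contrapose! h01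
    exact ⟨h01 1, h01 0⟩
  obtain ⟨j, hj⟩ : ∃ j, ![c 3, c 2] j ≠ 0 := by
    contrapose! h23
    exact ⟨h23 1, h23 0⟩
  have hs (k : Fin 2) : ![c 1 + c 3, c 0 + c 2] k = 0 := by
    have hminor := h ![⟨i, by omega⟩, ⟨2 + j, by omega⟩, ⟨4 + k, by omega⟩]
    rw [eval_det_confMatrix_submatrix_fin_two] at hminor
    simpa [hi, hj] using hminor
  exact ⟨hs 1, hs 0⟩

/-- the vanishing locus in `ℂ⁴` of the ideal of `3 × 3` minors of
the matrix `φ` with rows `(y₂, x₂, y₂, x₂, -y₂, -x₂)`, `(y₁, x₁, 0, 0, 0, 0)`,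
`(0, 0, y₂, x₂, y₁, x₁)` is the union of the three planes
`{x₁ = y₁ = 0} ∪ {x₂ = y₂ = 0} ∪ {x₁ + x₂ = y₁ + y₂ = 0}`. -/
theorem statement_18 :
    {c : Fin 4 → ℂ | ∀ g : Fin 3 → Fin 6,
        MvPolynomial.eval c (Matrix.det (confMatrix.submatrix id g)) = 0}
      = {c | c 0 = 0 ∧ c 1 = 0} ∪ {c | c 2 = 0 ∧ c 3 = 0}
          ∪ {c | c 0 + c 2 = 0 ∧ c 1 + c 3 = 0} := by
  ext c
  simp only [Set.mem_ofPred_eq, Set.mem_union]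
  refine ⟨fun h => ?_, eval_det_confMatrix_submatrix_eq_zero⟩
  by_cases h01 : c 0 = 0 ∧ c 1 = 0
  · exact Or.inl (Or.inl h01)
  by_cases h23 : c 2 = 0 ∧ c 3 = 0
  · exact Or.inl (Or.inr h23)
  exact Or.inr (add_eq_zero_of_forall_eval_det_confMatrix_submatrix_eq_zero h h01 h23)
end
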